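/- A module M over a ring R is co-Kasch if and only if for every element m of M and every simple right R-module S, Hom_R(mR, S) ≠ 0 implies Hom_R(M, S) ≠ 0. -/

import Mathlib

/-!
A simple subfactor `S ≤ M ⧸ K` is reached from any `m ∈ M` mapping to a nonzero element of `S`:
reduction mod `K` gives a nonzero map `mR → S`. Conversely a nonzero map `f : mR → S` into a
simple module is onto, and `S ≅ mR ⧸ ker f` embeds into `M ⧸ ker f` as the image of `mR`, so `S`
is isomorphic to a simple subfactor of `M`. Since nonzero maps into a simple module are exactly
the surjective ones, the two conditions agree.
-/

/-- A module `M` is *co-Kasch* if every simple subfactor of `M`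
(i.e. every simple submodule of a quotient of `M`) is a homomorphic image of `M`. -/
def IsCoKasch (R : Type*) [Ring R] (M : Type*) [AddCommGroup M] [Module R M] : Prop :=
  ∀ (K : Submodule R M) (S : Submodule R (M ⧸ K)), IsSimpleModule R S →
    ∃ f : M →ₗ[R] S, Function.Surjective f

variable {R M S : Type*} [Ring R] [AddCommGroup M] [Module R M] [AddCommGroup S] [Module R S]

open LinearMap Submodule

theorem Submodule.ker_mkQ_map_subtype_comp_subtype (N : Submodule R M) (P : Submodule R N) :
    ker ((P.map N.subtype).mkQ ∘ₗ N.subtype) = P := by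
  rw [ker_comp, ker_mkQ, comap_map_eq_of_injective N.injective_subtype]

abbrev Submodule.subfactorOfKer (N : Submodule R M) (f : N →ₗ[R] S) :
    Submodule R (M ⧸ (ker f).map N.subtype) :=
  range (((ker f).map N.subtype).mkQ ∘ₗ N.subtype)

noncomputable def Submodule.equivSubfactorOfKer (N : Submodule R M) (f : N →ₗ[R] S)
    (hf : Function.Surjective f) : S ≃ₗ[R] N.subfactorOfKer f :=
  (f.quotKerEquivOfSurjective hf).symm ≪≫ₗ
    quotEquivOfEq _ _ (N.ker_mkQ_map_subtype_comp_subtype (ker f)).symm ≪≫ₗ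
    quotKerEquivRange _

theorem IsCoKasch.exists_surjective_of_surjective_of_submodule (h : IsCoKasch R M)
    [IsSimpleModule R S] (N : Submodule R M) (f : N →ₗ[R] S) (hf : Function.Surjective f) :
    ∃ g : M →ₗ[R] S, Function.Surjective g := by
  let e := N.equivSubfactorOfKer f hf
  obtain ⟨g, hg⟩ := h _ _ (IsSimpleModule.congr e.symm)
  exact ⟨e.symm.toLinearMap ∘ₗ g, e.symm.surjective.comp hg⟩

theorem Submodule.exists_span_singleton_linearMap_ne_zero {K : Submodule R M}
    (T : Submodule R (M ⧸ K)) [Nontrivial T] :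
    ∃ m : M, ∃ f : span R {m} →ₗ[R] T, f ≠ 0 := by
  obtain ⟨s, hs⟩ := exists_ne (0 : T)
  obtain ⟨m, hm⟩ := K.mkQ_surjective s
  have hmem : ∀ x ∈ span R {m}, K.mkQ x ∈ T := by
    intro x hx
    obtain ⟨r, rfl⟩ := mem_span_singleton.mp hx
    rw [map_smul, hm]
    exact T.smul_mem r s.2
  refine ⟨m, K.mkQ.restrict hmem, fun h0 ↦ hs ?_⟩
  have hval := congr($h0 ⟨m, mem_span_singleton_self m⟩)
  exact Subtype.ext (hm ▸ congrArg Subtype.val hval)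

theorem stmt0 {R : Type u} [Ring R] {M : Type v} [AddCommGroup M] [Module R M] :
    IsCoKasch R M ↔
      ∀ (m : M) (S : Type v) [AddCommGroup S] [Module R S], IsSimpleModule R S →
        (∃ f : (Submodule.span R {m}) →ₗ[R] S, f ≠ 0) → ∃ g : M →ₗ[R] S, g ≠ 0 := by
  constructor
  · rintro h m S _ _ hS ⟨f, hf⟩
    obtain ⟨g, hg⟩ := h.exists_surjective_of_surjective_of_submodule _ f (surjective_of_ne_zero hf)
    have := IsSimpleModule.nontrivial R S
    exact ⟨g, ne_zero_of_surjective hg⟩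
  · intro h K S hS
    have := IsSimpleModule.nontrivial R S
    obtain ⟨m, f, hf⟩ := exists_span_singleton_linearMap_ne_zero S
    obtain ⟨g, hg⟩ := h m S hS ⟨f, hf⟩
    exact ⟨g, surjective_of_ne_zero hg⟩
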